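/- Let F0∈ℝ, γ∈ℝ, and let ψ,u,v∥,p be smooth on {R>0}×ℝ_φ×ℝ_Z. Set B := ((1/R)∂_Zψ)e_R+(F0/R)e_φ+(−(1/R)∂_Rψ)e_Z and v := (−R∂_Zu)e_R+(R∂_Ru)e_Z + v∥B. Then v·∇p + γp∇·v = −R[p,u] − 2γp∂_Zu + (v∥F0/R²)∂_φp + (v∥/R)[p,ψ] + (γp/R)[v∥,ψ] + (γpF0/R²)∂_φv∥; equivalently, any p with ∂_tp = −v·∇p − γp∇·v satisfies ∂_tp = R[p,u] + 2γp∂_Zu − (v∥F0/R²)∂_φp − (v∥/R)[p,ψ] − (γp/R)[v∥,ψ] − (γpF0/R²)∂_φv∥. -/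

import Mathlib

noncomputable section
set_option linter.unusedVariables false

open Real

/-- Scalar fields as functions of `(t, R, φ, Z)`. -/
abbrev F4 := ℝ → ℝ → ℝ → ℝ → ℝ

/-- Partial derivative in time `t`. -/
def dT (f : F4) (t R φ Z : ℝ) : ℝ := deriv (fun s => f s R φ Z) t

/-- Partial derivative in `R`. -/
def dR (f : F4) (t R φ Z : ℝ) : ℝ := deriv (fun r => f t r φ Z) R

/-- Partial derivative in `φ`. -/
def dP (f : F4) (t R φ Z : ℝ) : ℝ := deriv (fun a => f t R a Z) φ

/-- Partial derivative in `Z`. -/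
def dZ (f : F4) (t R φ Z : ℝ) : ℝ := deriv (fun z => f t R φ z) Z

/-- Joint smoothness (C^∞) in `(t,R,φ,Z)`. -/
def Smooth4 (f : F4) : Prop :=
  ContDiff ℝ (⊤ : ℕ∞) fun q : ℝ × ℝ × ℝ × ℝ => f q.1 q.2.1 q.2.2.1 q.2.2.2

/-- Poisson bracket `[a,b] = ∂_R a ∂_Z b − ∂_Z a ∂_R b` (spatial). -/
def pb (a b : F4) (t R φ Z : ℝ) : ℝ :=
  dR a t R φ Z * dZ b t R φ Z - dZ a t R φ Z * dR b t R φ Z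

/-- Grad–Shafranov operator `Δ* f = R ∂_R((1/R) ∂_R f) + ∂_ZZ f`. -/
def GS (f : F4) (t R φ Z : ℝ) : ℝ :=
  R * dR (fun s r a z => (1 / r) * dR f s r a z) t R φ Z + dZ (dZ f) t R φ Z

/-- Poloidal Laplacian `Δ_pol f = (1/R) ∂_R(R ∂_R f) + ∂_ZZ f`. -/
def LapPol (f : F4) (t R φ Z : ℝ) : ℝ :=
  (1 / R) * dR (fun s r a z => r * dR f s r a z) t R φ Z + dZ (dZ f) t R φ Z

/-- Cylindrical divergence `∇·F = (1/R)∂_R(R F_R) + (1/R)∂_φ F_φ + ∂_Z F_Z`. -/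
def divC (FR Fφ FZ : F4) (t R φ Z : ℝ) : ℝ :=
  (1 / R) * dR (fun s r a z => r * FR s r a z) t R φ Z + (1 / R) * dP Fφ t R φ Z
    + dZ FZ t R φ Z

/-- Scalar advection `X·∇f = X_R ∂_R f + (X_φ/R) ∂_φ f + X_Z ∂_Z f`. -/
def advS (XvR XvP XvZ f : F4) (t R φ Z : ℝ) : ℝ :=
  XvR t R φ Z * dR f t R φ Z + XvP t R φ Z / R * dP f t R φ Z + XvZ t R φ Z * dZ f t R φ Z

/-- `e_R`-component of `B = (1/R)∇ψ×e_φ + (F0/R)e_φ`. -/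
def BR (ψ : F4) : F4 := fun t R φ Z => (1 / R) * dZ ψ t R φ Z

/-- `e_φ`-component of the magnetic field. -/
def BP (F0 : ℝ) : F4 := fun _ R _ _ => F0 / R

/-- `e_Z`-component of the magnetic field. -/
def BZ (ψ : F4) : F4 := fun t R φ Z => -(1 / R) * dR ψ t R φ Z

/-- `e_R`-component of `v_pol = −R∇u×e_φ`. -/
def vR (u : F4) : F4 := fun t R φ Z => -R * dZ u t R φ Z

/-- `e_Z`-component of `v_pol = −R∇u×e_φ`. -/
def vZ (u : F4) : F4 := fun t R φ Z => R * dR u t R φ Z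

/-- The zero field. -/
def zeroF : F4 := fun _ _ _ _ => 0

/-- `∇_pol a · ∇_pol b`. -/
def gdot (a b : F4) : F4 := fun t R φ Z =>
  dR a t R φ Z * dR b t R φ Z + dZ a t R φ Z * dZ b t R φ Z

/-- `|B|² = (F0² + (∂_Rψ)² + (∂_Zψ)²)/R²`. -/
def B2 (F0 : ℝ) (ψ : F4) : F4 := fun t R φ Z =>
  (F0 ^ 2 + (dR ψ t R φ Z) ^ 2 + (dZ ψ t R φ Z) ^ 2) / R ^ 2

/-- `|B_pol|² = ((∂_Rψ)² + (∂_Zψ)²)/R²`. -/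
def Bpol2 (ψ : F4) : F4 := fun t R φ Z =>
  ((dR ψ t R φ Z) ^ 2 + (dZ ψ t R φ Z) ^ 2) / R ^ 2

/-- `ρ̂ = R²ρ`. -/
def rh (ρ : F4) : F4 := fun t R φ Z => R ^ 2 * ρ t R φ Z

/-- `|∇_pol u|²`. -/
def gradu2 (u : F4) : F4 := fun t R φ Z => (dR u t R φ Z) ^ 2 + (dZ u t R φ Z) ^ 2

/-- `e_R`-component of the total velocity `v = v_pol + v∥B`. -/
def vtotR (ψ u vpar : F4) : F4 := fun t R φ Z =>
  vR u t R φ Z + vpar t R φ Z * BR ψ t R φ Z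

/-- `e_φ`-component of the total velocity. -/
def vtotP (F0 : ℝ) (vpar : F4) : F4 := fun t R φ Z => vpar t R φ Z * BP F0 t R φ Z

/-- `e_Z`-component of the total velocity. -/
def vtotZ (ψ u vpar : F4) : F4 := fun t R φ Z =>
  vZ u t R φ Z + vpar t R φ Z * BZ ψ t R φ Z

/-!
The advection term `v·∇p` is a pointwise algebraic identity in first derivatives. For the
compression term, `R v_R = -R² ∂_Z u + v∥ ∂_Z ψ` (using `R ≠ 0`), so in `∇·v` the second
derivatives `-R ∂_R∂_Z u + R ∂_Z∂_R u` and `v∥ (∂_R∂_Z ψ - ∂_Z∂_R ψ) / R` cancel by the symmetry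
of mixed partials of smooth functions, leaving
`∇·v = -2 ∂_Z u + [v∥, ψ] / R + (F0 / R²) ∂_φ v∥`. The evolution form follows by substitution.
-/

def uncurry4 (f : F4) : ℝ × ℝ × ℝ × ℝ → ℝ := fun q => f q.1 q.2.1 q.2.2.1 q.2.2.2

theorem hasDerivAt_sliceR (t R φ Z : ℝ) :
    HasDerivAt (fun r => ((t, r, φ, Z) : ℝ × ℝ × ℝ × ℝ)) (0, 1, 0, 0) R :=
  (hasDerivAt_const R t).prodMk ((hasDerivAt_id R).prodMk
    ((hasDerivAt_const R φ).prodMk (hasDerivAt_const R Z)))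

theorem hasDerivAt_sliceP (t R φ Z : ℝ) :
    HasDerivAt (fun a => ((t, R, a, Z) : ℝ × ℝ × ℝ × ℝ)) (0, 0, 1, 0) φ :=
  (hasDerivAt_const φ t).prodMk ((hasDerivAt_const φ R).prodMk
    ((hasDerivAt_id φ).prodMk (hasDerivAt_const φ Z)))

theorem hasDerivAt_sliceZ (t R φ Z : ℝ) :
    HasDerivAt (fun z => ((t, R, φ, z) : ℝ × ℝ × ℝ × ℝ)) (0, 0, 0, 1) Z :=
  (hasDerivAt_const Z t).prodMk ((hasDerivAt_const Z R).prodMk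
    ((hasDerivAt_const Z φ).prodMk (hasDerivAt_id Z)))

namespace Smooth4

variable {f : F4}

theorem hasDerivAt_comp {c : ℝ → ℝ × ℝ × ℝ × ℝ} {v : ℝ × ℝ × ℝ × ℝ} {x : ℝ}
    (hf : Smooth4 f) (hc : HasDerivAt c v x) :
    HasDerivAt (uncurry4 f ∘ c) (fderiv ℝ (uncurry4 f) (c x) v) x :=
  ((hf.differentiable (by simp)) (c x)).hasFDerivAt.comp_hasDerivAt x hc

theorem dR_eq_fderiv (hf : Smooth4 f) (t R φ Z : ℝ) :
    dR f t R φ Z = fderiv ℝ (uncurry4 f) (t, R, φ, Z) (0, 1, 0, 0) :=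
  (hf.hasDerivAt_comp (hasDerivAt_sliceR t R φ Z)).deriv

theorem dZ_eq_fderiv (hf : Smooth4 f) (t R φ Z : ℝ) :
    dZ f t R φ Z = fderiv ℝ (uncurry4 f) (t, R, φ, Z) (0, 0, 0, 1) :=
  (hf.hasDerivAt_comp (hasDerivAt_sliceZ t R φ Z)).deriv

theorem hasDerivAt_dR (hf : Smooth4 f) (t R φ Z : ℝ) :
    HasDerivAt (fun r => f t r φ Z) (dR f t R φ Z) R :=
  (hf.hasDerivAt_comp (hasDerivAt_sliceR t R φ Z)).differentiableAt.hasDerivAt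

theorem hasDerivAt_dP (hf : Smooth4 f) (t R φ Z : ℝ) :
    HasDerivAt (fun a => f t R a Z) (dP f t R φ Z) φ :=
  (hf.hasDerivAt_comp (hasDerivAt_sliceP t R φ Z)).differentiableAt.hasDerivAt

theorem hasDerivAt_dZ (hf : Smooth4 f) (t R φ Z : ℝ) :
    HasDerivAt (fun z => f t R φ z) (dZ f t R φ Z) Z :=
  (hf.hasDerivAt_comp (hasDerivAt_sliceZ t R φ Z)).differentiableAt.hasDerivAt

theorem contDiff_fderiv (hf : Smooth4 f) : ContDiff ℝ (⊤ : ℕ∞) (fderiv ℝ (uncurry4 f)) :=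
  ContDiff.fderiv_right hf (by exact_mod_cast le_top)

theorem contDiff_fderiv_apply (hf : Smooth4 f) (v : ℝ × ℝ × ℝ × ℝ) :
    ContDiff ℝ (⊤ : ℕ∞) fun q => fderiv ℝ (uncurry4 f) q v :=
  hf.contDiff_fderiv.clm_apply contDiff_const

theorem uncurry4_dR (hf : Smooth4 f) :
    uncurry4 (dR f) = fun q => fderiv ℝ (uncurry4 f) q (0, 1, 0, 0) :=
  funext fun q => hf.dR_eq_fderiv q.1 q.2.1 q.2.2.1 q.2.2.2

theorem uncurry4_dZ (hf : Smooth4 f) :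
    uncurry4 (dZ f) = fun q => fderiv ℝ (uncurry4 f) q (0, 0, 0, 1) :=
  funext fun q => hf.dZ_eq_fderiv q.1 q.2.1 q.2.2.1 q.2.2.2

protected theorem dR (hf : Smooth4 f) : Smooth4 (dR f) := by
  change ContDiff ℝ _ (uncurry4 (dR f))
  rw [hf.uncurry4_dR]
  exact hf.contDiff_fderiv_apply _

protected theorem dZ (hf : Smooth4 f) : Smooth4 (dZ f) := by
  change ContDiff ℝ _ (uncurry4 (dZ f))
  rw [hf.uncurry4_dZ]
  exact hf.contDiff_fderiv_apply _

theorem fderiv_fderiv_apply (hf : Smooth4 f) (q v w : ℝ × ℝ × ℝ × ℝ) :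
    fderiv ℝ (fun x => fderiv ℝ (uncurry4 f) x v) q w
      = fderiv ℝ (fderiv ℝ (uncurry4 f)) q w v := by
  rw [fderiv_clm_apply (hf.contDiff_fderiv.differentiable (by simp) q)
    (differentiableAt_const v)]
  simp

theorem dR_dZ_comm (hf : Smooth4 f) (t R φ Z : ℝ) :
    dR (dZ f) t R φ Z = dZ (dR f) t R φ Z := by
  have hsymm : IsSymmSndFDerivAt ℝ (uncurry4 f) (t, R, φ, Z) :=
    ContDiffAt.isSymmSndFDerivAt hf.contDiffAt (by
      rw [minSmoothness_of_isRCLikeNormedField]; exact WithTop.coe_le_coe.2 le_top)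
  rw [hf.dZ.dR_eq_fderiv, hf.dR.dZ_eq_fderiv, hf.uncurry4_dZ, hf.uncurry4_dR,
    hf.fderiv_fderiv_apply, hf.fderiv_fderiv_apply, hsymm]

end Smooth4

section Velocity

variable {ψ u vpar : F4} (t R φ Z : ℝ)

theorem advS_vtot (F0 : ℝ) (p : F4) :
    advS (vtotR ψ u vpar) (vtotP F0 vpar) (vtotZ ψ u vpar) p t R φ Z
      = -R * pb p u t R φ Z + (vpar t R φ Z * F0 / R ^ 2) * dP p t R φ Z
        + (vpar t R φ Z / R) * pb p ψ t R φ Z := by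
  simp only [advS, vtotR, vtotP, vtotZ, vR, vZ, BR, BP, BZ, pb]
  ring

variable {t R φ Z}

theorem hasDerivAt_mul_vtotR (hψ : Smooth4 ψ) (hu : Smooth4 u) (hv : Smooth4 vpar)
    (hR : R ≠ 0) :
    HasDerivAt (fun r => r * vtotR ψ u vpar t r φ Z)
      (-(2 * R) * dZ u t R φ Z - R ^ 2 * dR (dZ u) t R φ Z
        + dR vpar t R φ Z * dZ ψ t R φ Z + vpar t R φ Z * dR (dZ ψ) t R φ Z) R := by
  have hpolar : (fun r => -(r ^ 2 * dZ u t r φ Z) + vpar t r φ Z * dZ ψ t r φ Z)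
      =ᶠ[nhds R] fun r => r * vtotR ψ u vpar t r φ Z := by
    filter_upwards [eventually_ne_nhds hR] with r hr
    simp only [vtotR, vR, BR]
    field_simp
  have hderiv := ((hasDerivAt_pow 2 R).mul (hu.dZ.hasDerivAt_dR t R φ Z)).neg.add
    ((hv.hasDerivAt_dR t R φ Z).mul (hψ.dZ.hasDerivAt_dR t R φ Z))
  refine (hderiv.congr_of_eventuallyEq hpolar.symm).congr_deriv ?_
  norm_num
  ring

theorem hasDerivAt_vtotP (F0 : ℝ) (hv : Smooth4 vpar) :
    HasDerivAt (fun a => vtotP F0 vpar t R a Z) (dP vpar t R φ Z * (F0 / R)) φ :=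
  (hv.hasDerivAt_dP t R φ Z).mul_const (F0 / R)

theorem hasDerivAt_vtotZ (hψ : Smooth4 ψ) (hu : Smooth4 u) (hv : Smooth4 vpar) :
    HasDerivAt (fun z => vtotZ ψ u vpar t R φ z)
      (R * dZ (dR u) t R φ Z
        - (dZ vpar t R φ Z * dR ψ t R φ Z + vpar t R φ Z * dZ (dR ψ) t R φ Z) / R) Z := by
  refine (((hu.dR.hasDerivAt_dZ t R φ Z).const_mul R).add
    ((hv.hasDerivAt_dZ t R φ Z).mul
      ((hψ.dR.hasDerivAt_dZ t R φ Z).const_mul (-(1 / R))))).congr_deriv ?_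
  ring

theorem divC_vtot (F0 : ℝ) (hψ : Smooth4 ψ) (hu : Smooth4 u) (hv : Smooth4 vpar)
    (hR : R ≠ 0) :
    divC (vtotR ψ u vpar) (vtotP F0 vpar) (vtotZ ψ u vpar) t R φ Z
      = -2 * dZ u t R φ Z + (1 / R) * pb vpar ψ t R φ Z
        + (F0 / R ^ 2) * dP vpar t R φ Z := by
  rw [divC, dR, dP, dZ, (hasDerivAt_mul_vtotR hψ hu hv hR).deriv,
    (hasDerivAt_vtotP F0 hv).deriv, (hasDerivAt_vtotZ hψ hu hv).deriv,
    hu.dR_dZ_comm, hψ.dR_dZ_comm, pb]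
  field_simp
  ring

theorem advS_add_mul_divC_vtot (F0 γ : ℝ) (p : F4) (hψ : Smooth4 ψ) (hu : Smooth4 u)
    (hv : Smooth4 vpar) (hR : R ≠ 0) :
    advS (vtotR ψ u vpar) (vtotP F0 vpar) (vtotZ ψ u vpar) p t R φ Z
        + γ * p t R φ Z * divC (vtotR ψ u vpar) (vtotP F0 vpar) (vtotZ ψ u vpar) t R φ Z
      = -R * pb p u t R φ Z - 2 * γ * p t R φ Z * dZ u t R φ Z
        + (vpar t R φ Z * F0 / R ^ 2) * dP p t R φ Z
        + (vpar t R φ Z / R) * pb p ψ t R φ Z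
        + (γ * p t R φ Z / R) * pb vpar ψ t R φ Z
        + (γ * p t R φ Z * F0 / R ^ 2) * dP vpar t R φ Z := by
  rw [advS_vtot, divC_vtot F0 hψ hu hv hR]
  ring

end Velocity

theorem pressure_advection_compression_general (F0 γ : ℝ) (ψ u vpar p : F4)
    (hψ : Smooth4 ψ) (hu : Smooth4 u) (hv : Smooth4 vpar) :
    (∀ t R φ Z : ℝ, 0 < R →
      advS (vtotR ψ u vpar) (vtotP F0 vpar) (vtotZ ψ u vpar) p t R φ Z
        + γ * p t R φ Z * divC (vtotR ψ u vpar) (vtotP F0 vpar) (vtotZ ψ u vpar) t R φ Z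
      = -R * pb p u t R φ Z - 2 * γ * p t R φ Z * dZ u t R φ Z
        + (vpar t R φ Z * F0 / R ^ 2) * dP p t R φ Z
        + (vpar t R φ Z / R) * pb p ψ t R φ Z
        + (γ * p t R φ Z / R) * pb vpar ψ t R φ Z
        + (γ * p t R φ Z * F0 / R ^ 2) * dP vpar t R φ Z) ∧
    ((∀ t R φ Z : ℝ, 0 < R →
        dT p t R φ Z
          = -advS (vtotR ψ u vpar) (vtotP F0 vpar) (vtotZ ψ u vpar) p t R φ Z
            - γ * p t R φ Z
              * divC (vtotR ψ u vpar) (vtotP F0 vpar) (vtotZ ψ u vpar) t R φ Z) →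
      ∀ t R φ Z : ℝ, 0 < R →
        dT p t R φ Z
          = R * pb p u t R φ Z + 2 * γ * p t R φ Z * dZ u t R φ Z
            - (vpar t R φ Z * F0 / R ^ 2) * dP p t R φ Z
            - (vpar t R φ Z / R) * pb p ψ t R φ Z
            - (γ * p t R φ Z / R) * pb vpar ψ t R φ Z
            - (γ * p t R φ Z * F0 / R ^ 2) * dP vpar t R φ Z) := by
  have combined := fun t R φ Z (hR : 0 < R) =>
    advS_add_mul_divC_vtot (t := t) (φ := φ) (Z := Z) F0 γ p hψ hu hv hR.ne'
  refine ⟨combined, fun hevol t R φ Z hR => ?_⟩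
  rw [hevol t R φ Z hR]
  linarith [combined t R φ Z hR]

/-- the advection–compression combination for the pressure, and the
resulting evolution form of the pressure equation. -/
theorem pressure_advection_compression (F0 γ : ℝ) (ψ u vpar p : F4)
    (hψ : Smooth4 ψ) (hu : Smooth4 u) (hv : Smooth4 vpar) (hp : Smooth4 p) :
    (∀ t R φ Z : ℝ, 0 < R →
      advS (vtotR ψ u vpar) (vtotP F0 vpar) (vtotZ ψ u vpar) p t R φ Z
        + γ * p t R φ Z * divC (vtotR ψ u vpar) (vtotP F0 vpar) (vtotZ ψ u vpar) t R φ Z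
      = -R * pb p u t R φ Z - 2 * γ * p t R φ Z * dZ u t R φ Z
        + (vpar t R φ Z * F0 / R ^ 2) * dP p t R φ Z
        + (vpar t R φ Z / R) * pb p ψ t R φ Z
        + (γ * p t R φ Z / R) * pb vpar ψ t R φ Z
        + (γ * p t R φ Z * F0 / R ^ 2) * dP vpar t R φ Z) ∧
    ((∀ t R φ Z : ℝ, 0 < R →
        dT p t R φ Z
          = -advS (vtotR ψ u vpar) (vtotP F0 vpar) (vtotZ ψ u vpar) p t R φ Z
            - γ * p t R φ Z
              * divC (vtotR ψ u vpar) (vtotP F0 vpar) (vtotZ ψ u vpar) t R φ Z) →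
      ∀ t R φ Z : ℝ, 0 < R →
        dT p t R φ Z
          = R * pb p u t R φ Z + 2 * γ * p t R φ Z * dZ u t R φ Z
            - (vpar t R φ Z * F0 / R ^ 2) * dP p t R φ Z
            - (vpar t R φ Z / R) * pb p ψ t R φ Z
            - (γ * p t R φ Z / R) * pb vpar ψ t R φ Z
            - (γ * p t R φ Z * F0 / R ^ 2) * dP vpar t R φ Z) :=
  pressure_advection_compression_general F0 γ ψ u vpar p hψ hu hv
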